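/- Define J_rot(ℰ) := (1/(√2·π)) ∫_{φ=−π}^{π} √(cos φ + ℰ) dφ for ℰ > 1. Then at every ℰ > 1 the function J_rot is differentiable with derivative J_rot'(ℰ) = (1/π) · √(2/(1+ℰ)) · K(2/(1+ℰ)). -/

import Mathlib

open MeasureTheory Real

/-- The complete elliptic integral of the first kind,
`K(m) = ∫₀¹ ds/(√(1−s²)·√(1−m s²))`. -/
noncomputable def ellipticK (m : ℝ) : ℝ :=
  ∫ s in (0 : ℝ)..1, 1 / (Real.sqrt (1 - s ^ 2) * Real.sqrt (1 - m * s ^ 2))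

/-- The Whitham modulation quantity for superluminal rotational wavetrains,
`J_rot(ℰ) = (1/(√2 π)) ∫_{−π}^{π} √(cos φ + ℰ) dφ`, for `ℰ > 1`. -/
noncomputable def J_rot (E : ℝ) : ℝ :=
  (1 / (Real.sqrt 2 * Real.pi)) * ∫ φ in (-Real.pi)..Real.pi, Real.sqrt (Real.cos φ + E)

/-!
For `ℰ > 1` the `ℰ`-derivative `1 / (2 √(cos φ + ℰ))` of the integrand is bounded uniformly
near `ℰ`, so one may differentiate under the integral sign:
`J_rot'(ℰ) = (1 / (2√2 π)) ∫_{-π}^{π} dφ / √(cos φ + ℰ)`.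
The integrand is even, and after `φ = 2θ` the identity
`cos 2θ + ℰ = (1 + ℰ) (1 − m sin² θ)`, `m = 2 / (1 + ℰ)`, turns the integral into
`(4 / √(1 + ℰ)) ∫_0^{π/2} dθ / √(1 − m sin² θ)`, which is `(4 / √(1 + ℰ)) K(m)` by the
substitution `s = sin θ` (Legendre's form of `K`).
-/

open Set

theorem ellipticK_eq_integral_sin_sq (m : ℝ) :
    ellipticK m = ∫ θ in (0 : ℝ)..π / 2, 1 / √(1 - m * sin θ ^ 2) := by
  have hmono : StrictMonoOn sin (Icc 0 (π / 2)) :=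
    strictMonoOn_sin.mono (Icc_subset_Icc (by linarith [pi_pos]) le_rfl)
  have himage : sin '' Ioo 0 (π / 2) = Ioo 0 1 := by
    rw [continuousOn_sin.image_Ioo_of_strictMonoOn (by positivity) hmono, sin_zero,
      sin_pi_div_two]
  have hsubst := integral_image_eq_integral_abs_deriv_smul measurableSet_Ioo
    (fun θ _ => (hasDerivAt_sin θ).hasDerivWithinAt)
    (hmono.injOn.mono Ioo_subset_Icc_self)
    (fun s => 1 / (√(1 - s ^ 2) * √(1 - m * s ^ 2)))
  rw [himage] at hsubst
  rw [ellipticK, intervalIntegral.integral_of_le zero_le_one,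
    intervalIntegral.integral_of_le (by positivity), integral_Ioc_eq_integral_Ioo,
    integral_Ioc_eq_integral_Ioo, hsubst]
  refine setIntegral_congr_fun measurableSet_Ioo fun θ hθ => ?_
  have hcos : 0 < cos θ := cos_pos_of_mem_Ioo ⟨by linarith [hθ.1, pi_pos], hθ.2⟩
  rw [← cos_sq', sqrt_sq hcos.le, abs_of_pos hcos, smul_eq_mul]
  field_simp

theorem intervalIntegral.integral_neg_self_eq_two_smul_of_even {F : Type*}
    [NormedAddCommGroup F] [NormedSpace ℝ F] {f : ℝ → F} (hf : ∀ x, f (-x) = f x) {a : ℝ}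
    (hint : IntervalIntegrable f volume 0 a) :
    ∫ x in -a..a, f x = (2 : ℝ) • ∫ x in 0..a, f x := by
  have hneg : ∫ x in -a..0, f x = ∫ x in 0..a, f x := by
    simpa [hf] using (integral_comp_neg (a := 0) (b := a) f).symm
  have hint_neg : IntervalIntegrable f volume (-a) 0 := by
    simpa [hf] using ((IntervalIntegrable.iff_comp_neg).mp hint).symm
  rw [← integral_add_adjacent_intervals hint_neg hint, hneg, two_smul]

theorem integral_zero_pi_one_div_sqrt_cos_add_eq_ellipticK {E : ℝ} (hE : 0 < 1 + E) :
    ∫ φ in (0 : ℝ)..π, 1 / √(cos φ + E) = 2 / √(1 + E) * ellipticK (2 / (1 + E)) := by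
  have hdouble : ∫ φ in (0 : ℝ)..π, 1 / √(cos φ + E)
      = 2 * ∫ θ in (0 : ℝ)..π / 2, 1 / √(cos (2 * θ) + E) := by
    rw [intervalIntegral.integral_comp_mul_left (fun φ => 1 / √(cos φ + E)) two_ne_zero,
      mul_zero, mul_div_cancel₀ π two_ne_zero, smul_eq_mul, mul_inv_cancel_left₀ two_ne_zero]
  have hfactor : ∀ θ, 1 / √(cos (2 * θ) + E)
      = 1 / √(1 + E) * (1 / √(1 - 2 / (1 + E) * sin θ ^ 2)) := by
    intro θ
    have hcos : cos (2 * θ) + E = (1 + E) * (1 - 2 / (1 + E) * sin θ ^ 2) := by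
      rw [cos_two_mul, cos_sq']
      field_simp
      ring
    rw [hcos, sqrt_mul hE.le]
    ring
  simp_rw [hdouble, hfactor, intervalIntegral.integral_const_mul,
    ← ellipticK_eq_integral_sin_sq]
  ring

theorem cos_add_pos {E : ℝ} (hE : 1 < E) (φ : ℝ) : 0 < cos φ + E := by
  linarith [neg_one_le_cos φ]

theorem continuous_one_div_sqrt_cos_add {E : ℝ} (hE : 1 < E) :
    Continuous fun φ => 1 / √(cos φ + E) :=
  continuous_const.div (continuous_cos.add continuous_const).sqrt
    fun φ => (sqrt_pos.2 (cos_add_pos hE φ)).ne'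

theorem integral_neg_pi_pi_one_div_sqrt_cos_add_eq_ellipticK {E : ℝ} (hE : 1 < E) :
    ∫ φ in -π..π, 1 / √(cos φ + E) = 4 / √(1 + E) * ellipticK (2 / (1 + E)) := by
  rw [intervalIntegral.integral_neg_self_eq_two_smul_of_even (by simp)
      ((continuous_one_div_sqrt_cos_add hE).intervalIntegrable _ _),
    integral_zero_pi_one_div_sqrt_cos_add_eq_ellipticK (by linarith), smul_eq_mul]
  ring

theorem hasDerivAt_integral_sqrt_cos_add (a b : ℝ) {E : ℝ} (hE : 1 < E) :
    HasDerivAt (fun x => ∫ φ in a..b, √(cos φ + x))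
      ((∫ φ in a..b, 1 / √(cos φ + E)) / 2) E := by
  set δ := (E - 1) / 2 with hδ_def
  have hδ : 0 < δ := by linarith
  have hlower : ∀ x ∈ Metric.ball E δ, ∀ φ, δ < cos φ + x := by
    intro x hx φ
    rw [Metric.mem_ball, dist_eq, abs_lt] at hx
    linarith [neg_one_le_cos φ]
  have hcont : ∀ x, Continuous fun φ => √(cos φ + x) :=
    fun x => (continuous_cos.add continuous_const).sqrt
  have hdom := intervalIntegral.hasDerivAt_integral_of_dominated_loc_of_deriv_le
    (μ := volume) (F' := fun x φ => 1 / √(cos φ + x) / 2) (bound := fun _ => 1 / √δ / 2)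
    (Metric.ball_mem_nhds E hδ) (.of_forall fun x => (hcont x).aestronglyMeasurable)
    ((hcont E).intervalIntegrable a b)
    ((continuous_one_div_sqrt_cos_add hE).div_const 2).aestronglyMeasurable
    (.of_forall fun φ _ x hx => ?bound) intervalIntegrable_const
    (.of_forall fun φ _ x hx => ?deriv)
  · simpa only [intervalIntegral.integral_div] using hdom.2
  case bound =>
    have hpos := sqrt_pos.2 (hδ.trans (hlower x hx φ))
    rw [norm_of_nonneg (by positivity)]
    gcongr
    exact (hlower x hx φ).le
  case deriv =>
    have hpos := hδ.trans (hlower x hx φ)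
    exact (((hasDerivAt_id x).const_add (cos φ)).sqrt hpos.ne').congr_deriv
      (by rw [id, div_div, mul_comm])

/-- **Derivative of the rotational averaged integral.** For every `ℰ > 1`, `J_rot` is
differentiable at `ℰ` with `J_rot'(ℰ) = (1/π) √(2/(1+ℰ)) K(2/(1+ℰ))`. -/
theorem J_rot_hasDerivAt (E : ℝ) (hE : 1 < E) :
    HasDerivAt J_rot ((1 / Real.pi) * Real.sqrt (2 / (1 + E)) * ellipticK (2 / (1 + E))) E := by
  have hderiv := (hasDerivAt_integral_sqrt_cos_add (-π) π hE).const_mul (1 / (√2 * π))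
  rw [integral_neg_pi_pi_one_div_sqrt_cos_add_eq_ellipticK hE] at hderiv
  refine hderiv.congr_deriv ?_
  have h1E : 0 < √(1 + E) := sqrt_pos.2 (by linarith)
  rw [sqrt_div zero_le_two]
  field_simp
  rw [sq_sqrt zero_le_two]
  ring
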